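/- arXiv:2207.03167 — 2 statements merged into one kernel-verified Lean document; each statement's English description precedes it below -/
import Mathlib

section
/- Let T be a simplicial tree and (g_n) a sequence of automorphisms such that d(v₀, g_n·v₀) is bounded for some vertex v₀. Then either (a) there is a vertex v, an element g, and a subsequence (g_{n_k}) with g_{n_k} ∈ Stab(v)·g for all k, or (b) there is a subsequence (g_{n_k}), a vertex v, and pairwise distinct edges e_{n_k} adjacent to v such that the geodesics [v₀, g_{n_k}·v₀] all share the common prefix [v₀,v] and continue through the distinct edges e_{n_k}. -/
/-!
Call `v` *deep* if infinitely many of the geodesics `[v₀, gₙ·v₀]` pass through `v`. Deep vertices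
lie within distance `B` of `v₀`, so there is a deepest one, `v`. If infinitely many `gₙ·v₀` equal
`v`, the corresponding `gₙ` lie in one coset of `Stab(v)`. Otherwise infinitely many of these
geodesics continue past `v`, each through a neighbour of `v`; a neighbour used infinitely often
would be a deeper deep vertex, so every neighbour is used finitely often, and a subsequence
passes through pairwise distinct edges at `v`.
-/

open Set Function

lemma Set.Infinite.exists_strictMono_mem {S : Set ℕ} (hS : S.Infinite) :
    ∃ φ : ℕ → ℕ, StrictMono φ ∧ ∀ k, φ k ∈ S :=
  Filter.extraction_of_frequently_atTop (Nat.frequently_atTop_iff_infinite.mpr hS)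

lemma Set.Infinite.exists_strictMono_mem_injective_comp {α : Type*} {S : Set ℕ}
    (hS : S.Infinite) {f : ℕ → α} (hfib : ∀ c, (S ∩ f ⁻¹' {c}).Finite) :
    ∃ φ : ℕ → ℕ, StrictMono φ ∧ (∀ k, φ k ∈ S) ∧ Injective (f ∘ φ) := by
  obtain ⟨U, hUS, hU⟩ := exists_subset_bijOn S f
  have himage : (f '' S).Infinite := fun h => hS (h.of_finite_fibers f fun c _ => hfib c)
  obtain ⟨φ, hφ, hφU⟩ := (Infinite.of_image f (hU.image_eq ▸ himage)).exists_strictMono_mem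
  exact ⟨φ, hφ, fun k => hUS (hφU k), fun i j hij => hφ.injective (hU.injOn (hφU i) (hφU j) hij)⟩

lemma Set.exists_max_image_of_bddAbove {α : Type*} {A : Set α} (f : α → ℕ) (hA : A.Nonempty)
    (hbdd : BddAbove (f '' A)) : ∃ a ∈ A, ∀ b ∈ A, f b ≤ f a := by
  obtain ⟨a, ha, hfa⟩ := Nat.sSup_mem (hA.image f) hbdd
  exact ⟨a, ha, fun b hb => hfa ▸ le_csSup hbdd (mem_image_of_mem f hb)⟩

namespace SimpleGraph

variable {V : Type*} {T : SimpleGraph V}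

lemma Connected.exists_adj_dist_add_one_eq (hc : T.Connected) {v q : V} (hvq : v ≠ q) :
    ∃ w, T.Adj v w ∧ T.dist w q + 1 = T.dist v q := by
  obtain ⟨p, hp⟩ := hc.exists_walk_length_eq_dist v q
  cases p with
  | nil => exact absurd rfl hvq
  | @cons _ w _ hadj p =>
    refine ⟨w, hadj, ?_⟩
    have hp_le : T.dist w q ≤ p.length := dist_le p
    have htri := hc.dist_triangle (u := v) (v := w) (w := q)
    rw [dist_eq_one_iff_adj.mpr hadj] at htri
    rw [Walk.length_cons] at hp
    omega

lemma Connected.geodesic_step_of_adj (hc : T.Connected) {v₀ v w q : V}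
    (hv : T.dist v₀ v + T.dist v q = T.dist v₀ q) (hadj : T.Adj v w)
    (hw : T.dist w q + 1 = T.dist v q) :
    T.dist v₀ w = T.dist v₀ v + 1 ∧ T.dist v₀ w + T.dist w q = T.dist v₀ q := by
  have h₁ := hc.dist_triangle (u := v₀) (v := w) (w := q)
  have h₂ := hc.dist_triangle (u := v₀) (v := v) (w := w)
  rw [dist_eq_one_iff_adj.mpr hadj] at h₂
  omega

theorem Connected.exists_infinite_fiber_or_branching (hc : T.Connected) (p : ℕ → V) (v₀ : V)
    (hbd : ∃ B : ℕ, ∀ n, T.dist v₀ (p n) ≤ B) :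
    (∃ v, {n | p n = v}.Infinite) ∨
      (∃ (φ : ℕ → ℕ) (v : V) (w : ℕ → V), StrictMono φ ∧ Injective w ∧ (∀ k, T.Adj v (w k)) ∧
        (∀ k, T.dist v₀ v + T.dist v (p (φ k)) = T.dist v₀ (p (φ k))) ∧
        (∀ k, T.dist v₀ (w k) = T.dist v₀ v + 1 ∧
          T.dist v₀ (w k) + T.dist (w k) (p (φ k)) = T.dist v₀ (p (φ k)))) := by
  obtain ⟨B, hB⟩ := hbd
  set through : V → Set ℕ := fun v => {n | T.dist v₀ v + T.dist v (p n) = T.dist v₀ (p n)}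
  set deep : Set V := {v | (through v).Infinite}
  have hdeep_bdd : BddAbove (T.dist v₀ '' deep) := ⟨B, by
    rintro _ ⟨c, hc, rfl⟩
    obtain ⟨n, hn : T.dist v₀ c + T.dist c (p n) = T.dist v₀ (p n)⟩ := hc.nonempty
    have := hB n
    omega⟩
  have hv₀ : v₀ ∈ deep := by simpa [deep, through] using infinite_univ
  obtain ⟨v, hv, hv_max⟩ := exists_max_image_of_bddAbove (T.dist v₀) ⟨v₀, hv₀⟩ hdeep_bdd
  by_cases hfix : {n | p n = v}.Infinite
  · exact .inl ⟨v, hfix⟩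
  set S := through v \ {n | p n = v}
  have hS : S.Infinite := hv.sdiff (not_infinite.mp hfix)
  have : Nonempty V := ⟨v₀⟩
  choose! w hw using fun n (hn : n ∈ S) => hc.exists_adj_dist_add_one_eq (Ne.symm hn.2)
  have hstep : ∀ n ∈ S, T.dist v₀ (w n) = T.dist v₀ v + 1 ∧
      T.dist v₀ (w n) + T.dist (w n) (p n) = T.dist v₀ (p n) :=
    fun n hn => hc.geodesic_step_of_adj hn.1 (hw n hn).1 (hw n hn).2
  have hfib : ∀ c, (S ∩ w ⁻¹' {c}).Finite := by
    intro c
    by_contra hinf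
    have hc_deep : c ∈ deep := (not_finite.mp hinf).mono
      fun m (hm : m ∈ S ∧ w m = c) => hm.2 ▸ (hstep m hm.1).2
    obtain ⟨n, hnS, hwn : w n = c⟩ := (not_finite.mp hinf).nonempty
    subst hwn
    have := hv_max _ hc_deep
    have := (hstep n hnS).1
    omega
  obtain ⟨φ, hφ, hφS, hinj⟩ := hS.exists_strictMono_mem_injective_comp hfib
  exact .inr ⟨φ, v, w ∘ φ, hφ, hinj, fun k => (hw _ (hφS k)).1, fun k => (hφS k).1,
    fun k => hstep _ (hφS k)⟩

end SimpleGraph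

theorem stmt13_general {V G : Type*} [Group G] (T : SimpleGraph V) (hT : T.IsTree)
    (ρ : G →* Equiv.Perm V)
    (g : ℕ → G) (v₀ : V)
    (hbd : ∃ B : ℕ, ∀ n, T.dist v₀ (ρ (g n) v₀) ≤ B) :
    (∃ (v : V) (h : G) (φ : ℕ → ℕ), StrictMono φ ∧
        ∀ k, ρ (g (φ k) * h⁻¹) v = v) ∨
      (∃ (φ : ℕ → ℕ) (v : V) (w : ℕ → V), StrictMono φ ∧
        Function.Injective w ∧ (∀ k, T.Adj v (w k)) ∧
        (∀ k, T.dist v₀ v + T.dist v (ρ (g (φ k)) v₀)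
            = T.dist v₀ (ρ (g (φ k)) v₀)) ∧
        (∀ k, T.dist v₀ (w k) = T.dist v₀ v + 1 ∧
          T.dist v₀ (w k) + T.dist (w k) (ρ (g (φ k)) v₀)
            = T.dist v₀ (ρ (g (φ k)) v₀))) := by
  refine (hT.connected.exists_infinite_fiber_or_branching _ v₀ hbd).imp_left ?_
  rintro ⟨v, hv⟩
  obtain ⟨φ, hφ, hφv⟩ := hv.exists_strictMono_mem
  have hv₀ : (ρ (g (φ 0)))⁻¹ v = v₀ := by
    rw [Equiv.Perm.inv_def, Equiv.symm_apply_eq]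
    exact (hφv 0).symm
  refine ⟨v, g (φ 0), φ, hφ, fun k => ?_⟩
  rw [map_mul, map_inv, Equiv.Perm.mul_apply, hv₀]
  exact hφv k

/-- Small-translation dichotomy: if `d(v₀, gₙ·v₀)` is bounded for a sequence of
automorphisms of a simplicial tree, then either (a) some subsequence lies in a
single coset `Stab(v)·h` of a vertex stabilizer, or (b) there are a subsequence
`g (φ k)`, a vertex `v` and pairwise distinct edges `{v, w k}` adjacent to `v`
such that every geodesic `[v₀, g (φ k)·v₀]` passes through `v` (common prefix
`[v₀,v]`) and continues through the edge `{v, w k}`. -/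
theorem stmt13 {V G : Type*} [Group G] (T : SimpleGraph V) (hT : T.IsTree)
    (ρ : G →* Equiv.Perm V)
    (hρ : ∀ (g : G) (a b : V), T.Adj a b → T.Adj (ρ g a) (ρ g b))
    (g : ℕ → G) (v₀ : V)
    (hbd : ∃ B : ℕ, ∀ n, T.dist v₀ (ρ (g n) v₀) ≤ B) :
    (∃ (v : V) (h : G) (φ : ℕ → ℕ), StrictMono φ ∧
        ∀ k, ρ (g (φ k) * h⁻¹) v = v) ∨
      (∃ (φ : ℕ → ℕ) (v : V) (w : ℕ → V), StrictMono φ ∧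
        Function.Injective w ∧ (∀ k, T.Adj v (w k)) ∧
        (∀ k, T.dist v₀ v + T.dist v (ρ (g (φ k)) v₀)
            = T.dist v₀ (ρ (g (φ k)) v₀)) ∧
        (∀ k, T.dist v₀ (w k) = T.dist v₀ v + 1 ∧
          T.dist v₀ (w k) + T.dist (w k) (ρ (g (φ k)) v₀)
            = T.dist v₀ (ρ (g (φ k)) v₀))) :=
  stmt13_general T hT ρ g v₀ hbd
end

section
/- Let G be a group acting as a convergence group on a compact metrizable space X, and suppose g ∈ G has infinite order and fixes a point p ∈ X that is not a conical limit point of the action, with g contained in a subgroup having no loxodromic elements. Then for any sequence (g_n = gⁿ), the translates g_n·y converge to p for all y in X apart from at most one exceptional point; i.e., a parabolic fixed point attracts under powers of parabolic elements. -/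
/-!
Every collapsing subsequence of `(gⁿ)` has attracting point `p`: otherwise its repelling point
would be `p` and `p` would be a conical limit point. Its repelling point is `p` as well: else
the inverse sequence, also collapsing towards `p`, composed with it would force every point
outside a single one to equal `p`. Hence, unless `X` has at most one point besides `p`, every
subsequence of `(gⁿ • y)` has a further subsequence converging to `p`.
-/

open Filter Topology

/-- A convergence action of `G` on `X`. -/
def IsConvergenceAction (G X : Type*) [Group G] [MulAction G X]
    [TopologicalSpace X] : Prop :=
  ∀ g : ℕ → G, Function.Injective g →
    ∃ φ : ℕ → ℕ, StrictMono φ ∧ ∃ x y : X,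
      ∀ K : Set X, IsCompact K → K ⊆ {y}ᶜ →
        ∀ U ∈ 𝓝 x, ∀ᶠ k in atTop, (fun p => g (φ k) • p) '' K ⊆ U

/-- `g` is loxodromic: infinite order with exactly two fixed points in `X`. -/
def IsLoxodromic {G : Type*} (X : Type*) [Group G] [MulAction G X] (g : G) : Prop :=
  ¬ IsOfFinOrder g ∧ ∃ a b : X, a ≠ b ∧ {x : X | g • x = x} = {a, b}

/-- `x` is a conical limit point for the elements of `S ⊆ G` acting on `X`. -/
def IsConicalLimitPoint {G X : Type*} [Group G] [MulAction G X]
    [TopologicalSpace X] (S : Set G) (x : X) : Prop :=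
  ∃ g : ℕ → G, (∀ n, g n ∈ S) ∧ ∃ z y : X, z ≠ y ∧
    Tendsto (fun n => g n • x) atTop (𝓝 z) ∧
    ∀ x' : X, x' ≠ x → Tendsto (fun n => g n • x') atTop (𝓝 y)

def IsCollapsing {G X : Type*} [Group G] [MulAction G X] [TopologicalSpace X]
    (g : ℕ → G) (a b : X) : Prop :=
  ∀ K : Set X, IsCompact K → K ⊆ {b}ᶜ →
    ∀ U ∈ 𝓝 a, ∀ᶠ n in atTop, (fun q => g n • q) '' K ⊆ U

section

variable {G X : Type*} [Group G] [MulAction G X] [TopologicalSpace X]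

theorem IsConvergenceAction.exists_isCollapsing (hconv : IsConvergenceAction G X)
    {g : ℕ → G} (hg : Function.Injective g) :
    ∃ φ : ℕ → ℕ, StrictMono φ ∧ ∃ a b : X, IsCollapsing (g ∘ φ) a b :=
  hconv g hg

theorem tendsto_smul_self_of_forall_mem_stabilizer {g : ℕ → G} {p : X}
    (hfix : ∀ n, g n ∈ MulAction.stabilizer G p) : Tendsto (fun n => g n • p) atTop (𝓝 p) := by
  simp only [MulAction.mem_stabilizer_iff.mp (hfix _)]
  exact tendsto_const_nhds

namespace IsCollapsing

variable {g : ℕ → G} {a b : X}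

theorem tendsto_smul (h : IsCollapsing g a b) {x : X} (hx : x ≠ b) :
    Tendsto (fun n => g n • x) atTop (𝓝 a) :=
  tendsto_def.2 fun U hU =>
    (h {x} isCompact_singleton (by simpa using hx.symm) U hU).mono fun _ hn => hn ⟨x, rfl, rfl⟩

theorem comp (h : IsCollapsing g a b) {ρ : ℕ → ℕ} (hρ : Tendsto ρ atTop atTop) :
    IsCollapsing (g ∘ ρ) a b :=
  fun K hK hKb U hU => hρ.eventually (h K hK hKb U hU)

/-- `x = g n • (g n)⁻¹ • x`, where `(g n)⁻¹ • x` eventually lies in a compact neighbourhood of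
`a'` avoiding `b`, on which `g n` tends uniformly to `a`. -/
theorem eq_of_tendsto_inv_smul [LocallyCompactSpace X] [T2Space X] (h : IsCollapsing g a b)
    {a' b' : X} (hinv : ∀ x ≠ b', Tendsto (fun n => (g n)⁻¹ • x) atTop (𝓝 a'))
    (ha' : a' ≠ b) {x : X} (hx : x ≠ b') : x = a := by
  obtain ⟨K, hK, ha'K, hKb⟩ :=
    exists_compact_subset isOpen_compl_singleton (Set.mem_compl_singleton_iff.mpr ha')
  have hmem : ∀ᶠ n in atTop, (g n)⁻¹ • x ∈ K :=
    (hinv x hx).eventually_mem (mem_interior_iff_mem_nhds.mp ha'K)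
  refine tendsto_nhds_unique (l := (atTop : Filter ℕ)) tendsto_const_nhds
    (tendsto_def.2 fun U hU => ?_)
  filter_upwards [hmem, h K hK hKb U hU] with n hnK hnU
  simpa using hnU ⟨_, hnK, rfl⟩

theorem attractor_eq_of_mem_stabilizer [T2Space X] (h : IsCollapsing g a b) {p : X}
    (hfix : ∀ n, g n ∈ MulAction.stabilizer G p)
    (hnc : ¬ IsConicalLimitPoint (Set.univ : Set G) p) : a = p := by
  have hconst := tendsto_smul_self_of_forall_mem_stabilizer hfix
  by_cases hb : b = p
  · subst hb
    by_contra ha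
    exact hnc ⟨g, fun _ => trivial, b, a, Ne.symm ha, hconst, fun x hx => h.tendsto_smul hx⟩
  · exact tendsto_nhds_unique (h.tendsto_smul (Ne.symm hb)) hconst

theorem repeller_eq_of_mem_stabilizer [LocallyCompactSpace X] [T2Space X]
    (hconv : IsConvergenceAction G X) (hg : Function.Injective g) (h : IsCollapsing g a b)
    {p : X} (hfix : ∀ n, g n ∈ MulAction.stabilizer G p)
    (hnc : ¬ IsConicalLimitPoint (Set.univ : Set G) p) (hX : ∀ q : X, ∃ x, x ≠ p ∧ x ≠ q) :
    b = p := by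
  have ha : a = p := h.attractor_eq_of_mem_stabilizer hfix hnc
  subst a
  by_contra hb
  obtain ⟨ρ, hρ, a', b', hinv⟩ := hconv.exists_isCollapsing (inv_injective.comp hg)
  have ha' : a' = p := hinv.attractor_eq_of_mem_stabilizer (fun n => inv_mem (hfix _)) hnc
  subst a'
  obtain ⟨x, hxp, hxb'⟩ := hX b'
  exact hxp <| (h.comp hρ.tendsto_atTop).eq_of_tendsto_inv_smul
    (fun y hy => by simpa using hinv.tendsto_smul hy) (Ne.symm hb) hxb'

end IsCollapsing

theorem tendsto_smul_of_forall_mem_stabilizer [LocallyCompactSpace X] [T2Space X]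
    (hconv : IsConvergenceAction G X) {g : ℕ → G} (hg : Function.Injective g) {p : X}
    (hfix : ∀ n, g n ∈ MulAction.stabilizer G p)
    (hnc : ¬ IsConicalLimitPoint (Set.univ : Set G) p) (hX : ∀ q : X, ∃ x, x ≠ p ∧ x ≠ q)
    (y : X) : Tendsto (fun n => g n • y) atTop (𝓝 p) := by
  by_contra hy
  obtain ⟨U, hU, hfreq⟩ := not_tendsto_iff_exists_frequently_notMem.mp hy
  obtain ⟨φ, hφ, hφU⟩ := extraction_of_frequently_atTop hfreq
  obtain ⟨ψ, hψ, a, b, h⟩ := hconv.exists_isCollapsing (hg.comp hφ.injective)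
  have hfixφψ : ∀ n, (g ∘ φ ∘ ψ) n ∈ MulAction.stabilizer G p := fun n => hfix _
  have ha : a = p := h.attractor_eq_of_mem_stabilizer hfixφψ hnc
  have hb : b = p :=
    h.repeller_eq_of_mem_stabilizer hconv (hg.comp (hφ.comp hψ).injective) hfixφψ hnc hX
  subst a b
  have hlim : Tendsto (fun n => g (φ (ψ n)) • y) atTop (𝓝 p) := by
    rcases eq_or_ne y p with rfl | hya
    · exact tendsto_smul_self_of_forall_mem_stabilizer hfixφψ
    · exact h.tendsto_smul hya
  obtain ⟨n, hn⟩ := (hlim.eventually_mem hU).exists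
  exact hφU (ψ n) hn

end

theorem stmt15_general {G X : Type*} [Group G] [TopologicalSpace X] [CompactSpace X]
    [TopologicalSpace.MetrizableSpace X] [MulAction G X]
    (hconv : IsConvergenceAction G X)
    (g : G) (hg : ¬ IsOfFinOrder g) (p : X) (hfix : g • p = p)
    (hnc : ¬ IsConicalLimitPoint (Set.univ : Set G) p) :
    ∃ w : X, ∀ y : X, y ≠ w → Tendsto (fun n : ℕ => g ^ n • y) atTop (𝓝 p) := by
  have hpow : ∀ n : ℕ, g ^ n ∈ MulAction.stabilizer G p :=
    fun n => pow_mem (MulAction.mem_stabilizer_iff.mpr hfix) n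
  by_cases hX : ∀ q : X, ∃ x, x ≠ p ∧ x ≠ q
  · exact ⟨p, fun y _ => tendsto_smul_of_forall_mem_stabilizer hconv
      (injective_pow_iff_not_isOfFinOrder.mpr hg) hpow hnc hX y⟩
  · push Not at hX
    obtain ⟨q, hq⟩ := hX
    refine ⟨q, fun y hyq => ?_⟩
    obtain rfl : y = p := by_contra fun hyp => hyq (hq y hyp)
    exact tendsto_smul_self_of_forall_mem_stabilizer hpow

/-- Parabolic fixed points attract under powers of parabolic elements: if `g`
has infinite order, fixes a point `p` which is not a conical limit point, and
lies in a subgroup with no loxodromic elements, then the translates `gⁿ·y`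
converge to `p` for all `y ∈ X` apart from at most one exceptional point. -/
theorem stmt15 {G X : Type*} [Group G] [TopologicalSpace X] [CompactSpace X]
    [TopologicalSpace.MetrizableSpace X] [MulAction G X]
    (hconv : IsConvergenceAction G X)
    (g : G) (hg : ¬ IsOfFinOrder g) (p : X) (hfix : g • p = p)
    (hnc : ¬ IsConicalLimitPoint (Set.univ : Set G) p)
    (P : Subgroup G) (hgP : g ∈ P) (hP : ∀ h ∈ P, ¬ IsLoxodromic X h) :
    ∃ w : X, ∀ y : X, y ≠ w → Tendsto (fun n : ℕ => g ^ n • y) atTop (𝓝 p) :=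
  stmt15_general hconv g hg p hfix hnc
end
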